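/- arXiv:2505.00166 — 3 statements merged into one kernel-verified Lean document; each statement's English description precedes it below -/
import Mathlib

section
/- Let k be a positive integer, U ⊆ ℝ^n open, f : U → ℝ a C^k function, and x0 ∈ U with f(x0) = 0. Suppose f has order α at x0 with 0 < α ≤ k. Then f admits an α-derivative at x0, the initial part of f at x0 exists, and in_{x0}(f)(x) = D^α_+f_{x0}(x − x0) for all x; equivalently, f(x) = D^α_+f_{x0}(x − x0) + o(‖x − x0‖^α) as x → x0. -/
open Filter Set Metric Topology Asymptotics

noncomputable section

set_option synthInstance.maxHeartbeats 1000000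

/-- `ℝ^n` with the Euclidean structure. -/
abbrev Eucl (n : ℕ) : Type := EuclideanSpace ℝ (Fin n)

variable {V W : Type*} [NormedAddCommGroup V] [NormedSpace ℝ V]
  [NormedAddCommGroup W] [NormedSpace ℝ W]

/-- `F` admits the `α`-derivative `H` at `x`:  `H` is continuous and for every direction `v`,
`F (x + t v) - F x = t ^ α • H v + o(t ^ α)` as `t → 0⁺`. -/
def HasAlphaDerivAt (F : V → W) (x : V) (α : ℝ) (H : V → W) : Prop :=
  Continuous H ∧ ∀ v : V,
    Tendsto (fun t : ℝ => (t ^ α)⁻¹ • (F (x + t • v) - F x - t ^ α • H v))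
      (𝓝[>] (0 : ℝ)) (𝓝 0)

/-- `F` has order `α` at `x`: for every nonzero direction `v` the limit of
`F (x + t v) / t ^ α` as `t → 0⁺` exists, and for at least one `v` it is nonzero. -/
def HasOrderAt (F : V → W) (x : V) (α : ℝ) : Prop :=
  (∀ v : V, v ≠ 0 → ∃ L : W,
      Tendsto (fun t : ℝ => (t ^ α)⁻¹ • F (x + t • v)) (𝓝[>] (0 : ℝ)) (𝓝 L)) ∧
  ∃ v : V, v ≠ 0 ∧ ∃ L : W, L ≠ 0 ∧
      Tendsto (fun t : ℝ => (t ^ α)⁻¹ • F (x + t • v)) (𝓝[>] (0 : ℝ)) (𝓝 L)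

/-- `φ` is a lipeomorphism from `U` onto `V'`. -/
def IsLipeoOn (φ : V → W) (U : Set V) (V' : Set W) : Prop :=
  Set.BijOn φ U V' ∧ ∃ c : ℝ, 1 ≤ c ∧ ∀ x ∈ U, ∀ y ∈ U,
    (1 / c) * ‖x - y‖ ≤ ‖φ x - φ y‖ ∧ ‖φ x - φ y‖ ≤ c * ‖x - y‖

/-- `d` is a pseudo-Lipschitz derivative of `φ` at `x`: along some sequence `t_j → 0⁺`,
`(φ (x + t_j v) - φ x) / t_j → d v` uniformly on compact sets. -/
def IsPseudoLipDerivAt (φ : V → V) (x : V) (d : V → V) : Prop :=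
  ∃ t : ℕ → ℝ, (∀ j, 0 < t j) ∧ Tendsto t atTop (𝓝 (0 : ℝ)) ∧
    ∀ K : Set V, IsCompact K →
      TendstoUniformlyOn (fun j v => (t j)⁻¹ • (φ (x + t j • v) - φ x)) d atTop K

/-- `F ∼ G` at `x₀`: asymptotic equivalence of `F` and `G` at `x₀`. -/
def AsympEquivAt (F G : V → W) (x₀ : V) : Prop :=
  ∃ c₁ c₂ : ℝ, 0 < c₁ ∧ 0 < c₂ ∧
    ∀ᶠ x in 𝓝 x₀, c₂ * ‖F x‖ ≤ ‖G x‖ ∧ ‖G x‖ ≤ c₁ * ‖F x‖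

/-- `F ≈ G` at `x₀` via the lipeomorphism `φ`. -/
def AsympLipEquivAtVia {V' : Type*} [NormedAddCommGroup V'] [NormedSpace ℝ V']
    (F : V → W) (G : V' → W) (φ : V → V') (x₀ : V) : Prop :=
  ∃ c : ℝ, 1 ≤ c ∧ ∀ᶠ x in 𝓝 x₀,
    (1 / c) * ‖F x - F x₀‖ ≤ ‖G (φ x) - G (φ x₀)‖ ∧
      ‖G (φ x) - G (φ x₀)‖ ≤ c * ‖F x - F x₀‖

/-- The degree-`m` term of the Taylor series of `F` at `0`; for a `C^∞` germ of
finite order `m` this is its initial part `in(F)`. -/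
def inPart (F : V → ℝ) (m : ℕ) : V → ℝ :=
  fun x => (m.factorial : ℝ)⁻¹ • iteratedFDeriv ℝ m F 0 (fun _ => x)

/-!
Taylor's formula gives `f (x₀ + y) = ∑_{j ≤ k} P_j y + o(‖y‖ ^ k)`, where `P_j = inPart` of the
germ at `x₀` is homogeneous of degree `j`. If `P_j = 0` for `j < m ≤ k`, then
`f (x₀ + y) = P_m y + o(‖y‖ ^ m)`, so along every ray `f (x₀ + t v) / t ^ m → P_m v`.
Since `f (x₀ + t v) / t ^ β = t ^ (α - β) · f (x₀ + t v) / t ^ α → 0` for `β < α`, induction gives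
`P_j = 0` for all `j < α`, and then `α = m := ⌈α⌉₊` because the limit along a direction where the
order is attained is nonzero. Thus `P_m` is both the `α`-derivative and the initial part.
-/

theorem isBigO_norm_pow_norm_pow {E : Type*} [SeminormedAddCommGroup E] {m k : ℕ} (h : m ≤ k) :
    (fun y : E => ‖y‖ ^ k) =O[𝓝 0] fun y => ‖y‖ ^ m := by
  rcases h.lt_or_eq with h | rfl
  · exact (isLittleO_norm_pow_norm_pow h).isBigO
  · exact isBigO_refl _ _

theorem iteratedDeriv_comp_smul_right {F : V → W} {y : V} {s : ℝ} {j : ℕ}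
    (hF : ContDiffAt ℝ j F (s • y)) :
    iteratedDeriv j (fun t : ℝ => F (t • y)) s = iteratedFDeriv ℝ j F (s • y) (fun _ => y) := by
  obtain ⟨u, hu, hFu⟩ := hF.contDiffOn le_rfl (by simp)
  obtain ⟨o, hou, ho, hso⟩ := _root_.mem_nhds_iff.1 hu
  set g := ContinuousLinearMap.toSpanSingleton ℝ y
  have hgo : IsOpen (g ⁻¹' o) := ho.preimage g.continuous
  have hs : s ∈ g ⁻¹' o := by simpa [g] using hso
  have hcomp := g.iteratedFDerivWithin_comp_right (hFu.mono hou) ho.uniqueDiffOn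
    hgo.uniqueDiffOn hs le_rfl
  rw [iteratedFDerivWithin_of_isOpen _ hgo hs, iteratedFDerivWithin_of_isOpen _ ho hs] at hcomp
  rw [iteratedDeriv_eq_iteratedFDeriv]
  change iteratedFDeriv ℝ j (F ∘ g) s (fun _ => 1) = _
  simp [hcomp, g]

theorem eq_zero_of_tendsto_inv_rpow_smul_of_lt {g : ℝ → W} {α β : ℝ} {L c : W} (hβα : β < α)
    (hα : Tendsto (fun t => (t ^ α)⁻¹ • g t) (𝓝[>] 0) (𝓝 L))
    (hβ : Tendsto (fun t => (t ^ β)⁻¹ • g t) (𝓝[>] 0) (𝓝 c)) : c = 0 := by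
  have hpow : Tendsto (fun t : ℝ => t ^ (α - β)) (𝓝[>] 0) (𝓝 0) :=
    (tendsto_id.rpow_const_nhds_zero (sub_pos.2 hβα)).mono_left nhdsWithin_le_nhds
  have hprod := hpow.smul hα
  rw [zero_smul] at hprod
  refine tendsto_nhds_unique (hβ.congr' ?_) hprod
  filter_upwards [self_mem_nhdsWithin] with t (ht : 0 < t)
  rw [smul_smul, Real.rpow_sub ht, div_mul_eq_mul_div, mul_inv_cancel₀ (by positivity), one_div]

theorem HasOrderAt.exists_tendsto {F : V → W} {x : V} {α : ℝ} (hord : HasOrderAt F x α)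
    (hFx : F x = 0) (v : V) :
    ∃ L, Tendsto (fun t : ℝ => (t ^ α)⁻¹ • F (x + t • v)) (𝓝[>] 0) (𝓝 L) := by
  rcases eq_or_ne v 0 with rfl | hv
  · exact ⟨0, by simp [hFx]⟩
  · exact hord.1 v hv

theorem HasAlphaDerivAt.tendsto {F : V → W} {x : V} {α : ℝ} {H : V → W}
    (hH : HasAlphaDerivAt F x α H) (hFx : F x = 0) (v : V) :
    Tendsto (fun t : ℝ => (t ^ α)⁻¹ • F (x + t • v)) (𝓝[>] 0) (𝓝 (H v)) := by
  have := (hH.2 v).add_const (H v)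
  rw [zero_add] at this
  refine this.congr' ?_
  filter_upwards [self_mem_nhdsWithin] with t (ht : 0 < t)
  rw [hFx, sub_zero, smul_sub, smul_smul, inv_mul_cancel₀ (by positivity), one_smul,
    sub_add_cancel]

theorem hasOrderAt_comp_add_left_iff {F : V → W} {x : V} {α : ℝ} :
    HasOrderAt (fun y => F (x + y)) 0 α ↔ HasOrderAt F x α := by
  simp only [HasOrderAt, zero_add]

theorem hasAlphaDerivAt_comp_add_left_iff {F : V → W} {x : V} {α : ℝ} {H : V → W} :
    HasAlphaDerivAt (fun y => F (x + y)) 0 α H ↔ HasAlphaDerivAt F x α H := by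
  simp only [HasAlphaDerivAt, zero_add, add_zero]

theorem inPart_smul (F : V → ℝ) (m : ℕ) (t : ℝ) (v : V) :
    inPart F m (t • v) = t ^ m * inPart F m v := by
  simp only [inPart, smul_eq_mul,
    (iteratedFDeriv ℝ m F 0).map_smul_univ (fun _ => t) (fun _ => v), Finset.prod_const,
    Finset.card_univ, Fintype.card_fin]
  ring

theorem continuous_inPart (F : V → ℝ) (m : ℕ) : Continuous (inPart F m) :=
  continuous_const.mul <|
    (iteratedFDeriv ℝ m F 0).coe_continuous.comp (continuous_pi fun _ => continuous_id)

theorem inPart_isBigO (F : V → ℝ) (m : ℕ) (l : Filter V) :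
    inPart F m =O[l] fun y => ‖y‖ ^ m := by
  refine .of_bound ((m.factorial : ℝ)⁻¹ * ‖iteratedFDeriv ℝ m F 0‖) (.of_forall fun y => ?_)
  rw [inPart, norm_smul, norm_inv, RCLike.norm_natCast, norm_pow, norm_norm, mul_assoc]
  gcongr
  exact (iteratedFDeriv ℝ m F 0).le_opNorm_mul_pow_of_le (pi_norm_const_le y)

section InitialPart

variable {F : V → ℝ}

theorem exists_sub_sum_inPart_eq (n : ℕ) {y : V}
    (hF : ∀ s ∈ Icc (0 : ℝ) 1, ContDiffAt ℝ (n + 1) F (s • y)) :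
    ∃ ξ ∈ Ioo (0 : ℝ) 1, F y - ∑ j ∈ Finset.range (n + 2), inPart F j y =
      ((n + 1).factorial : ℝ)⁻¹ *
        (iteratedFDeriv ℝ (n + 1) F (ξ • y) - iteratedFDeriv ℝ (n + 1) F 0) (fun _ => y) := by
  set φ : ℝ → ℝ := fun t => F (t • y)
  have hφ : ∀ s ∈ Icc (0 : ℝ) 1, ContDiffAt ℝ (n + 1) φ s := fun s hs =>
    (hF s hs).comp s (contDiffAt_id.smul contDiffAt_const)
  obtain ⟨ξ, hξ, hlag⟩ := taylor_mean_remainder_lagrange_iteratedDeriv (x₀ := 0) (x := 1)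
    zero_ne_one fun s hs => (hφ s (by rwa [uIcc_of_le zero_le_one] at hs)).contDiffWithinAt
  rw [uIoo_of_le zero_le_one] at hξ
  rw [uIcc_of_le zero_le_one] at hlag
  have htaylor : taylorWithinEval φ n (Icc 0 1) 0 1 =
      ∑ j ∈ Finset.range (n + 1), inPart F j y := by
    rw [taylor_within_apply]
    refine Finset.sum_congr rfl fun j hj => ?_
    have hjn : (j : WithTop ℕ∞) ≤ n + 1 := by
      have := Finset.mem_range.1 hj
      exact_mod_cast (by omega : j ≤ n + 1)
    rw [iteratedDerivWithin_eq_iteratedDeriv (uniqueDiffOn_Icc zero_lt_one)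
      ((hφ 0 (by simp)).of_le hjn) (by simp),
      iteratedDeriv_comp_smul_right (((hF 0 (by simp)).of_le hjn))]
    simp [inPart]
  rw [iteratedDeriv_comp_smul_right (hF ξ (Ioo_subset_Icc_self hξ)), htaylor] at hlag
  refine ⟨ξ, hξ, ?_⟩
  rw [Finset.sum_range_succ, ← sub_sub, show F y = φ 1 by simp [φ], hlag]
  simp only [inPart, smul_eq_mul, sub_apply]
  ring

theorem isLittleO_sub_sum_inPart {k : ℕ} (hF : ContDiffAt ℝ k F 0) :
    (fun y => F y - ∑ j ∈ Finset.range (k + 1), inPart F j y) =o[𝓝 0] fun y => ‖y‖ ^ k := by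
  cases k with
  | zero =>
    simpa [inPart, isLittleO_one_iff, tendsto_sub_nhds_zero_iff] using hF.continuousAt.tendsto
  | succ n =>
    rw [isLittleO_iff]
    intro ε hε
    obtain ⟨δ, hδ, hball⟩ := Metric.eventually_nhds_iff_ball.1 <|
      (hF.eventually (by simp)).and <|
        (hF.continuousAt_iteratedFDeriv le_rfl).eventually (ball_mem_nhds _ hε)
    filter_upwards [ball_mem_nhds 0 hδ] with y hy
    have hseg : ∀ s ∈ Icc (0 : ℝ) 1, s • y ∈ ball (0 : V) δ := fun s hs =>
      (convex_ball 0 δ).smul_mem_of_zero_mem (mem_ball_self hδ) hy hs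
    obtain ⟨ξ, hξ, heq⟩ := exists_sub_sum_inPart_eq n fun s hs => (hball _ (hseg s hs)).1
    have hD := (hball _ (hseg ξ (Ioo_subset_Icc_self hξ))).2
    rw [dist_eq_norm] at hD
    have hfac : ((n + 1).factorial : ℝ)⁻¹ ≤ 1 := inv_le_one_of_one_le₀ (by
      exact_mod_cast (n + 1).factorial_pos)
    rw [heq, norm_mul, norm_inv, RCLike.norm_natCast, norm_pow, norm_norm]
    calc ((n + 1).factorial : ℝ)⁻¹ *
          ‖(iteratedFDeriv ℝ (n + 1) F (ξ • y) - iteratedFDeriv ℝ (n + 1) F 0) fun _ => y‖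
        ≤ 1 * (‖iteratedFDeriv ℝ (n + 1) F (ξ • y) - iteratedFDeriv ℝ (n + 1) F 0‖ *
            ‖y‖ ^ (n + 1)) := by
          gcongr
          exact ContinuousMultilinearMap.le_opNorm_mul_pow_of_le _ (pi_norm_const_le y)
      _ ≤ ε * ‖y‖ ^ (n + 1) := by rw [one_mul]; gcongr

theorem isLittleO_sub_inPart_of_forall_lt {k m : ℕ} (hF : ContDiffAt ℝ k F 0) (hmk : m ≤ k)
    (hlow : ∀ j < m, inPart F j = 0) :
    (fun y => F y - inPart F m y) =o[𝓝 0] fun y => ‖y‖ ^ m := by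
  have hsplit : ∀ y, F y - inPart F m y = (F y - ∑ j ∈ Finset.range (k + 1), inPart F j y) +
      ∑ j ∈ Finset.Ico (m + 1) (k + 1), inPart F j y := fun y => by
    rw [← Finset.sum_range_add_sum_Ico _ (by omega : m ≤ k + 1),
      Finset.sum_eq_sum_Ico_succ_bot (by omega : m < k + 1),
      Finset.sum_eq_zero fun j hj => by rw [hlow j (Finset.mem_range.1 hj), Pi.zero_apply]]
    ring
  simp_rw [hsplit]
  refine ((isLittleO_sub_sum_inPart hF).trans_isBigO (isBigO_norm_pow_norm_pow hmk)).add ?_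
  refine IsLittleO.fun_sum fun j hj => ?_
  exact (inPart_isBigO F j _).trans_isLittleO
    (isLittleO_norm_pow_norm_pow (Finset.mem_Ico.1 hj).1)

theorem hasAlphaDerivAt_inPart {m : ℕ}
    (h : (fun y => F y - inPart F m y) =o[𝓝 0] fun y => ‖y‖ ^ m) (hF0 : F 0 = 0) :
    HasAlphaDerivAt F 0 m (inPart F m) := by
  refine ⟨continuous_inPart F m, fun v => ?_⟩
  have hray : Tendsto (fun t : ℝ => t • v) (𝓝 0) (𝓝 0) := by
    simpa using (tendsto_id (x := 𝓝 (0 : ℝ))).smul_const v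
  have hbound : (fun t : ℝ => ‖t • v‖ ^ m) =O[𝓝 0] fun t => t ^ m :=
    .of_bound (‖v‖ ^ m) (.of_forall fun t => by simp [norm_smul, mul_pow, mul_comm])
  have hlo := ((h.comp_tendsto hray).trans_isBigO hbound).tendsto_div_nhds_zero
  refine (hlo.mono_left nhdsWithin_le_nhds).congr' ?_
  filter_upwards [self_mem_nhdsWithin] with t (ht : 0 < t)
  simp [hF0, inPart_smul, Real.rpow_natCast, div_eq_inv_mul]

theorem inPart_eq_zero_of_lt_order {k : ℕ} (hF : ContDiffAt ℝ k F 0) (hF0 : F 0 = 0) {α : ℝ}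
    (hαk : α ≤ k) (hord : HasOrderAt F 0 α) (j : ℕ) (hj : (j : ℝ) < α) : inPart F j = 0 := by
  induction j using Nat.strong_induction_on with
  | _ j ih =>
    have hlo := isLittleO_sub_inPart_of_forall_lt hF (by exact_mod_cast (hj.trans_le hαk).le)
      fun i hi => ih i hi ((Nat.cast_lt.2 hi).trans hj)
    funext v
    obtain ⟨L, hL⟩ := hord.exists_tendsto hF0 v
    exact eq_zero_of_tendsto_inv_rpow_smul_of_lt hj hL
      ((hasAlphaDerivAt_inPart hlo hF0).tendsto hF0 v)

theorem exists_nat_eq_order_isLittleO_sub_inPart {k : ℕ} (hF : ContDiffAt ℝ k F 0) (hF0 : F 0 = 0)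
    {α : ℝ} (hαk : α ≤ k) (hord : HasOrderAt F 0 α) :
    ∃ m : ℕ, (m : ℝ) = α ∧ (fun y => F y - inPart F m y) =o[𝓝 0] (fun y => ‖y‖ ^ m) ∧
      ∃ v ≠ 0, inPart F m v ≠ 0 := by
  have hlo := isLittleO_sub_inPart_of_forall_lt hF (Nat.ceil_le.2 hαk)
    fun j hj => inPart_eq_zero_of_lt_order hF hF0 hαk hord j (Nat.lt_ceil.1 hj)
  obtain ⟨-, v, hv, L, hL, hvL⟩ := hord
  have hvm := (hasAlphaDerivAt_inPart hlo hF0).tendsto hF0 v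
  have hαm : α = ⌈α⌉₊ := (Nat.le_ceil α).antisymm <| not_lt.1 fun hlt =>
    hL (eq_zero_of_tendsto_inv_rpow_smul_of_lt hlt hvm hvL)
  rw [← hαm] at hvm
  exact ⟨⌈α⌉₊, hαm.symm, hlo, v, hv, tendsto_nhds_unique hvL hvm ▸ hL⟩

theorem not_tendsto_inv_norm_sub_pow_mul_inPart {m : ℕ} (x₀ : V) {v : V} (hv : v ≠ 0)
    (hFv : inPart F m v ≠ 0) :
    ¬ Tendsto (fun x => (‖x - x₀‖ ^ m)⁻¹ * inPart F m (x - x₀)) (𝓝[≠] x₀) (𝓝 0) := by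
  intro h
  have hline : Tendsto (fun t : ℝ => x₀ + t • v) (𝓝[>] 0) (𝓝[≠] x₀) := by
    refine tendsto_nhdsWithin_of_tendsto_nhds_of_eventually_within _ ?_ ?_
    · exact ((Continuous.tendsto' (by fun_prop) 0 x₀ (by simp))).mono_left nhdsWithin_le_nhds
    · filter_upwards [self_mem_nhdsWithin] with t (ht : 0 < t)
      simpa using smul_ne_zero ht.ne' hv
  have hconst := (h.comp hline).congr' (f₂ := fun _ => (‖v‖ ^ m)⁻¹ * inPart F m v) <| by
    filter_upwards [self_mem_nhdsWithin] with t (ht : 0 < t)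
    simp only [Function.comp_apply, add_sub_cancel_left, inPart_smul, norm_smul,
      Real.norm_of_nonneg ht.le, mul_pow, mul_inv]
    field_simp
  exact mul_ne_zero (by positivity) hFv (tendsto_nhds_unique tendsto_const_nhds hconst)

end InitialPart

theorem initialPart_eq_alphaDeriv_of_contDiffOn_general {n : ℕ} (k : ℕ)
    (U : Set (Eucl n)) (hU : IsOpen U)
    (f : Eucl n → ℝ) (hf : ContDiffOn ℝ (k : ℕ∞) f U)
    (x₀ : Eucl n) (hx₀ : x₀ ∈ U) (hf0 : f x₀ = 0)
    (α : ℝ) (hαk : α ≤ (k : ℝ)) (hord : HasOrderAt f x₀ α) :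
    ∃ H : Eucl n → ℝ, HasAlphaDerivAt f x₀ α H ∧
      (fun x => f x - H (x - x₀)) =o[𝓝 x₀] (fun x => ‖x - x₀‖ ^ α) ∧
      ¬ Tendsto (fun x => (‖x - x₀‖ ^ α)⁻¹ * H (x - x₀)) (𝓝[≠] x₀) (𝓝 (0 : ℝ)) := by
  set F : Eucl n → ℝ := fun y => f (x₀ + y)
  have hF : ContDiffAt ℝ k F 0 := by
    have hfx₀ : ContDiffAt ℝ k f (x₀ + 0) := by simpa using hf.contDiffAt (hU.mem_nhds hx₀)
    exact hfx₀.comp 0 (contDiffAt_const.add contDiffAt_id)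
  have hF0 : F 0 = 0 := by simpa [F] using hf0
  obtain ⟨m, rfl, hlo, v, hv, hFv⟩ :=
    exists_nat_eq_order_isLittleO_sub_inPart hF hF0 hαk (hasOrderAt_comp_add_left_iff.2 hord)
  refine ⟨inPart F m, hasAlphaDerivAt_comp_add_left_iff.1 (hasAlphaDerivAt_inPart hlo hF0), ?_, ?_⟩
  · have hsub : Tendsto (fun x => x - x₀) (𝓝 x₀) (𝓝 0) := tendsto_sub_nhds_zero_iff.2 tendsto_id
    simpa [Function.comp_def, F, Real.rpow_natCast] using hlo.comp_tendsto hsub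
  · simpa [Real.rpow_natCast] using not_tendsto_inv_norm_sub_pow_mul_inPart x₀ hv hFv

/-- a `C^k` function of order `α ≤ k` at `x₀` admits an `α`-derivative at `x₀`,
its initial part at `x₀` exists and `in_{x₀}(f)(x) = D^α_+ f_{x₀}(x - x₀)`, i.e.
`f x = D^α_+ f_{x₀} (x - x₀) + o(‖x - x₀‖ ^ α)` as `x → x₀`. -/
theorem initialPart_eq_alphaDeriv_of_contDiffOn {n : ℕ} (k : ℕ) (hk : 1 ≤ k)
    (U : Set (Eucl n)) (hU : IsOpen U)
    (f : Eucl n → ℝ) (hf : ContDiffOn ℝ (k : ℕ∞) f U)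
    (x₀ : Eucl n) (hx₀ : x₀ ∈ U) (hf0 : f x₀ = 0)
    (α : ℝ) (hα : 0 < α) (hαk : α ≤ (k : ℝ)) (hord : HasOrderAt f x₀ α) :
    ∃ H : Eucl n → ℝ, HasAlphaDerivAt f x₀ α H ∧
      (fun x => f x - H (x - x₀)) =o[𝓝 x₀] (fun x => ‖x - x₀‖ ^ α) ∧
      ¬ Tendsto (fun x => (‖x - x₀‖ ^ α)⁻¹ * H (x - x₀)) (𝓝[≠] x₀) (𝓝 (0 : ℝ)) :=
  initialPart_eq_alphaDeriv_of_contDiffOn_general k U hU f hf x₀ hx₀ hf0 α hαk hord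
end
end

section
/- Let U, V ⊆ ℝ^n be open, F : U → ℝ^p and G : V → ℝ^p differentiable maps, φ : U → V a lipeomorphism such that F ≈_x G via φ at a point x ∈ U, and let d : ℝ^n → ℝ^n be a pseudo-Lipschitz derivative of φ at x. Then d(ker D_xF) = ker D_{φ(x)}G, where D_xF denotes the total derivative of F at x. -/
open Filter Set Metric Topology Asymptotics

noncomputable section

set_option synthInstance.maxHeartbeats 1000000

variable {V W : Type*} [NormedAddCommGroup V] [NormedSpace ℝ V]
  [NormedAddCommGroup W] [NormedSpace ℝ W]

/-! Along the sequence `t_j → 0⁺` defining `d`, the difference quotients of `F` at `x` in the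
direction `v` tend to `D_xF v` and those of `G ∘ φ` tend to `D_{φ x}G (d v)`, so the two-sided
bound defining `F ≈_x G` survives in the limit and `D_xF v = 0 ↔ D_{φ x}G (d v) = 0`. It remains
that `d` is onto. It is Lipschitz, as a pointwise limit of rescalings of `φ`; and since `φ⁻¹` is
Lipschitz near `φ x`, each `w` is a difference quotient of `φ` at a point `v_j` of a fixed
compact ball, so by uniform convergence `w` lies in the closed set `d '' ball`. -/

open scoped NNReal

theorem HasFDerivAt.tendsto_inv_smul_sub {ι : Type*} {l : Filter ι} {f : V → W}
    {f' : V →L[ℝ] W} {x : V} (hf : HasFDerivAt f f' x) {t : ι → ℝ} (ht : Tendsto t l (𝓝[≠] 0))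
    {u : ι → V} {v : V} (hu : Tendsto (fun j => (t j)⁻¹ • (u j - x)) l (𝓝 v)) :
    Tendsto (fun j => (t j)⁻¹ • (f (u j) - f x)) l (𝓝 (f' v)) := by
  have hne : ∀ᶠ j in l, t j ≠ 0 := ht self_mem_nhdsWithin
  have hu_sub : Tendsto (fun j => u j - x) l (𝓝 0) := by
    have h := (tendsto_nhdsWithin_iff.1 ht).1.smul hu
    rw [zero_smul] at h
    exact h.congr' (hne.mono fun j hj => smul_inv_smul₀ hj _)
  simpa using (hasFDerivWithinAt_univ.2 hf).lim hu_sub (.of_forall fun _ => mem_univ _) hu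

theorem le_of_tendsto_inv_smul {ι : Type*} {l : Filter ι} [l.NeBot] {t : ι → ℝ}
    {u : ι → V} {w : ι → W} {a : V} {b : W} {r s : ℝ}
    (hu : Tendsto (fun j => (t j)⁻¹ • u j) l (𝓝 a)) (hw : Tendsto (fun j => (t j)⁻¹ • w j) l (𝓝 b))
    (h : ∀ᶠ j in l, r * ‖u j‖ ≤ s * ‖w j‖) : r * ‖a‖ ≤ s * ‖b‖ := by
  refine le_of_tendsto_of_tendsto (hu.norm.const_mul r) (hw.norm.const_mul s) ?_
  filter_upwards [h] with j hj
  calc r * ‖(t j)⁻¹ • u j‖ = ‖(t j)⁻¹‖ * (r * ‖u j‖) := by rw [norm_smul]; ring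
    _ ≤ ‖(t j)⁻¹‖ * (s * ‖w j‖) := by gcongr
    _ = s * ‖(t j)⁻¹ • w j‖ := by rw [norm_smul]; ring

theorem IsLipeoOn.exists_lipschitzOnWith {E E' : Type*} [NormedAddCommGroup E]
    [NormedAddCommGroup E'] {φ : E → E'} {U : Set E} {V' : Set E'}
    (hφ : IsLipeoOn φ U V') : ∃ K : ℝ≥0, LipschitzOnWith K φ U := by
  obtain ⟨-, c, hc, hlip⟩ := hφ
  refine ⟨c.toNNReal, LipschitzOnWith.of_dist_le_mul fun a ha b hb => ?_⟩
  rw [dist_eq_norm, dist_eq_norm, Real.coe_toNNReal c (by linarith)]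
  exact (hlip a ha b hb).2

theorem IsLipeoOn.exists_eventually_exists_preimage {E E' : Type*} [NormedAddCommGroup E]
    [NormedAddCommGroup E'] {φ : E → E'} {U : Set E} {V' : Set E'}
    (hφ : IsLipeoOn φ U V') (hV' : IsOpen V') {x : E} (hx : x ∈ U) :
    ∃ C : ℝ, ∀ᶠ y in 𝓝 (φ x), ∃ z, φ z = y ∧ ‖z - x‖ ≤ C * ‖y - φ x‖ := by
  obtain ⟨hbij, c, hc, hlip⟩ := hφ
  refine ⟨c, eventually_of_mem (hV'.mem_nhds (hbij.mapsTo hx)) fun y hy => ?_⟩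
  obtain ⟨z, hz, rfl⟩ := hbij.surjOn hy
  refine ⟨z, rfl, ?_⟩
  have h := (hlip z hz x hx).1
  rw [one_div, inv_mul_le_iff₀ (by linarith)] at h
  exact h

namespace IsPseudoLipDerivAt

variable {φ d : V → V} {x : V}

theorem lipschitzWith {U : Set V} {K : ℝ≥0} (hd : IsPseudoLipDerivAt φ x d) (hU : U ∈ 𝓝 x)
    (hφ : LipschitzOnWith K φ U) : LipschitzWith K d := by
  obtain ⟨t, ht0, htz, hunif⟩ := hd
  have hslope : ∀ u, Tendsto (fun j => (t j)⁻¹ • (φ (x + t j • u) - φ x)) atTop (𝓝 (d u)) :=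
    fun u => (hunif {u} isCompact_singleton).tendsto_at rfl
  have hmem : ∀ u, ∀ᶠ j in atTop, x + t j • u ∈ U := fun u =>
    (by simpa using tendsto_const_nhds.add (htz.smul_const u) : Tendsto _ _ (𝓝 x)).eventually hU
  refine LipschitzWith.of_dist_le_mul fun u v => le_of_tendsto ((hslope u).dist (hslope v)) ?_
  filter_upwards [hmem u, hmem v] with j hu hv
  have htj : ‖(t j)⁻¹‖ * ‖t j‖ = 1 := by rw [← norm_mul, inv_mul_cancel₀ (ht0 j).ne', norm_one]
  calc dist ((t j)⁻¹ • (φ (x + t j • u) - φ x)) ((t j)⁻¹ • (φ (x + t j • v) - φ x))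
      = ‖(t j)⁻¹‖ * dist (φ (x + t j • u)) (φ (x + t j • v)) := by
        rw [dist_smul₀, dist_sub_right]
    _ ≤ ‖(t j)⁻¹‖ * (K * dist (x + t j • u) (x + t j • v)) := by
        gcongr
        exact hφ.dist_le_mul _ hu _ hv
    _ = K * (‖(t j)⁻¹‖ * ‖t j‖) * dist u v := by rw [dist_add_left, dist_smul₀]; ring
    _ = K * dist u v := by rw [htj, mul_one]

theorem surjective [ProperSpace V] (hd : IsPseudoLipDerivAt φ x d) (hd_cont : Continuous d)
    {C : ℝ} (hinv : ∀ᶠ y in 𝓝 (φ x), ∃ z, φ z = y ∧ ‖z - x‖ ≤ C * ‖y - φ x‖) :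
    Function.Surjective d := by
  obtain ⟨t, ht0, htz, hunif⟩ := hd
  intro w
  set K := closedBall (0 : V) (C * ‖w‖)
  have hK : IsCompact K := isCompact_closedBall _ _
  have hhit : ∀ᶠ j in atTop, ∃ v ∈ K, (t j)⁻¹ • (φ (x + t j • v) - φ x) = w := by
    have hy : Tendsto (fun j => φ x + t j • w) atTop (𝓝 (φ x)) := by
      simpa using tendsto_const_nhds.add (htz.smul_const w)
    filter_upwards [hy.eventually hinv] with j ⟨z, hz, hzx⟩
    have htj := (ht0 j).ne'
    refine ⟨(t j)⁻¹ • (z - x), ?_, by simp [smul_inv_smul₀ htj, hz, inv_smul_smul₀ htj]⟩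
    rw [mem_closedBall, dist_zero_right, norm_smul, norm_inv, Real.norm_of_nonneg (ht0 j).le,
      inv_mul_le_iff₀ (ht0 j)]
    simpa [norm_smul, Real.norm_of_nonneg (ht0 j).le, mul_left_comm] using hzx
  have hw : w ∈ closure (d '' K) := by
    refine Metric.mem_closure_iff.2 fun ε hε => ?_
    obtain ⟨j, ⟨v, hvK, hv⟩, hj⟩ :=
      (hhit.and (Metric.tendstoUniformlyOn_iff.1 (hunif K hK) ε hε)).exists
    refine ⟨d v, mem_image_of_mem d hvK, ?_⟩
    rw [dist_comm, ← hv]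
    exact hj v hvK
  rw [(hK.image hd_cont).isClosed.closure_eq] at hw
  obtain ⟨v, -, rfl⟩ := hw
  exact ⟨v, rfl⟩

theorem exists_tendsto_slopes {F G : V → W} {A B : V →L[ℝ] W} (hd : IsPseudoLipDerivAt φ x d)
    (hF : HasFDerivAt F A x) (hG : HasFDerivAt G B (φ x)) (v : V) :
    ∃ t : ℕ → ℝ, Tendsto (fun j => x + t j • v) atTop (𝓝 x) ∧
      Tendsto (fun j => (t j)⁻¹ • (F (x + t j • v) - F x)) atTop (𝓝 (A v)) ∧
      Tendsto (fun j => (t j)⁻¹ • (G (φ (x + t j • v)) - G (φ x))) atTop (𝓝 (B (d v))) := by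
  obtain ⟨t, ht0, htz, hunif⟩ := hd
  have ht : Tendsto t atTop (𝓝[≠] 0) :=
    tendsto_nhdsWithin_iff.2 ⟨htz, .of_forall fun j => (ht0 j).ne'⟩
  refine ⟨t, by simpa using tendsto_const_nhds.add (htz.smul_const v),
    hF.tendsto_inv_smul_sub ht ?_,
    hG.tendsto_inv_smul_sub ht ((hunif {v} isCompact_singleton).tendsto_at rfl)⟩
  simp [inv_smul_smul₀ (ht0 _).ne']

theorem apply_eq_zero_iff_of_asympLipEquivAtVia {F G : V → W} {A B : V →L[ℝ] W}
    (hd : IsPseudoLipDerivAt φ x d) (hF : HasFDerivAt F A x) (hG : HasFDerivAt G B (φ x))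
    (hequiv : AsympLipEquivAtVia F G φ x) (v : V) : A v = 0 ↔ B (d v) = 0 := by
  obtain ⟨c, hc, hev⟩ := hequiv
  obtain ⟨t, hxt, hFt, hGt⟩ := hd.exists_tendsto_slopes hF hG v
  have hev' := hxt.eventually hev
  have hlower := le_of_tendsto_inv_smul (r := 1 / c) (s := 1) hFt hGt
    (hev'.mono fun j hj => by rw [one_mul]; exact hj.1)
  have hupper := le_of_tendsto_inv_smul (r := 1) (s := c) hGt hFt
    (hev'.mono fun j hj => by rw [one_mul]; exact hj.2)
  have hc' : 0 < 1 / c := by positivity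
  constructor
  · intro h
    simpa [h] using hupper
  · intro h
    have : 1 / c * ‖A v‖ ≤ 0 := by simpa [h] using hlower
    exact norm_le_zero_iff.1 (nonpos_of_mul_nonpos_right this hc')

end IsPseudoLipDerivAt

/-- if `F ≈_x G` via a lipeomorphism `φ` and `d` is a pseudo-Lipschitz
derivative of `φ` at `x`, then `d (ker D_x F) = ker D_{φ(x)} G`. -/
theorem image_ker_fderiv_of_asympLipEquiv {n p : ℕ}
    (U V : Set (Eucl n)) (hU : IsOpen U) (hV : IsOpen V)
    (F G : Eucl n → Eucl p)
    (hF : ∀ y ∈ U, DifferentiableAt ℝ F y) (hG : ∀ y ∈ V, DifferentiableAt ℝ G y)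
    (φ : Eucl n → Eucl n) (hφ : IsLipeoOn φ U V)
    (x : Eucl n) (hx : x ∈ U)
    (hequiv : AsympLipEquivAtVia F G φ x)
    (d : Eucl n → Eucl n) (hd : IsPseudoLipDerivAt φ x d) :
    d '' (LinearMap.ker (fderiv ℝ F x : Eucl n →ₗ[ℝ] Eucl p) : Set (Eucl n)) =
      (LinearMap.ker (fderiv ℝ G (φ x) : Eucl n →ₗ[ℝ] Eucl p) : Set (Eucl n)) := by
  obtain ⟨K, hlip⟩ := hφ.exists_lipschitzOnWith
  obtain ⟨C, hinv⟩ := hφ.exists_eventually_exists_preimage hV hx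
  have hsurj : Function.Surjective d :=
    hd.surjective (hd.lipschitzWith (hU.mem_nhds hx) hlip).continuous hinv
  have hker : (LinearMap.ker (fderiv ℝ F x : Eucl n →ₗ[ℝ] Eucl p) : Set (Eucl n)) =
      d ⁻¹' LinearMap.ker (fderiv ℝ G (φ x) : Eucl n →ₗ[ℝ] Eucl p) := by
    ext v
    exact hd.apply_eq_zero_iff_of_asympLipEquivAtVia (hF x hx).hasFDerivAt
      (hG (φ x) (hφ.1.mapsTo hx)).hasFDerivAt hequiv v
  rw [hker, image_preimage_eq _ hsurj]
end
end

section
/- Let U, V ⊆ ℝ^n be open, F : U → ℝ^p and G : V → ℝ^p differentiable maps, and φ : U → V a lipeomorphism such that F ≈_x G via φ at a point x ∈ U. Then rank D_xF = rank D_{φ(x)}G, where D_xF denotes the total derivative of F at x. -/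
/-!
Blow up `φ` at `x`: along an ultrafilter `t → 0⁺` the rescalings `v ↦ (φ (x + t v) - φ x) / t`
converge pointwise (they are uniformly bounded on bounded sets, and the target is proper) to a map
`d` that is still bi-Lipschitz from below. The comparison `‖G ∘ φ - G (φ x)‖ ≤ C ‖F - F x‖`
makes `D G ∘ φ` vanish to first order on `ker D_x F`, so `d` maps `ker D_x F` into
`ker D_{φ x} G`; an antilipschitz map cannot lower the Hausdorff dimension, whence
`dim ker D_x F ≤ dim ker D_{φ x} G`. Applying this to `φ⁻¹` gives equality, and rank–nullity
finishes the proof.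
-/

open Filter Set Metric Topology Asymptotics

noncomputable section

set_option synthInstance.maxHeartbeats 1000000

variable {V W : Type*} [NormedAddCommGroup V] [NormedSpace ℝ V]
  [NormedAddCommGroup W] [NormedSpace ℝ W]

universe w

lemma one_div_mul_le_and_le_mul_symm {a b c : ℝ} (hc : 0 < c) (h : 1 / c * a ≤ b ∧ b ≤ c * a) :
    1 / c * b ≤ a ∧ a ≤ c * b := by
  rw [one_div] at h ⊢
  exact ⟨(inv_mul_le_iff₀ hc).2 h.2, (inv_mul_le_iff₀ hc).1 h.1⟩

theorem LinearMap.rank_eq_rank_of_finrank_ker_eq {K M : Type*} {N N' : Type w} [Field K]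
    [AddCommGroup M] [Module K M] [AddCommGroup N] [Module K N] [AddCommGroup N'] [Module K N']
    [FiniteDimensional K M] {f : M →ₗ[K] N} {g : M →ₗ[K] N'}
    (h : Module.finrank K (LinearMap.ker f) = Module.finrank K (LinearMap.ker g)) :
    f.rank = g.rank := by
  have hf := f.finrank_range_add_finrank_ker
  have hg := g.finrank_range_add_finrank_ker
  change Module.rank K (LinearMap.range f) = Module.rank K (LinearMap.range g)
  rw [← Module.finrank_eq_rank, ← Module.finrank_eq_rank]
  congr 1
  omega

theorem AntilipschitzWith.finrank_le {E E' : Type*} [NormedAddCommGroup E] [NormedSpace ℝ E]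
    [FiniteDimensional ℝ E] [NormedAddCommGroup E'] [NormedSpace ℝ E'] [FiniteDimensional ℝ E']
    {k : NNReal} {f : E → E'} (hf : AntilipschitzWith k f) :
    Module.finrank ℝ E ≤ Module.finrank ℝ E' := by
  have h := (hf.le_dimH_image univ).trans (dimH_mono (subset_univ _))
  rwa [Real.dimH_univ_eq_finrank, Real.dimH_univ_eq_finrank, Nat.cast_le] at h

section Bilipschitz

variable {E E' : Type*} [NormedAddCommGroup E] [NormedAddCommGroup E']

def IsBilipschitzOn (φ : E → E') (c : ℝ) (s : Set E) : Prop :=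
  ∀ x ∈ s, ∀ y ∈ s, (1 / c) * ‖x - y‖ ≤ ‖φ x - φ y‖ ∧ ‖φ x - φ y‖ ≤ c * ‖x - y‖

variable {φ : E → E'} {c : ℝ} {s : Set E}

theorem isLipeoOn_iff {t : Set E'} :
    IsLipeoOn φ s t ↔ BijOn φ s t ∧ ∃ c, 1 ≤ c ∧ IsBilipschitzOn φ c s :=
  Iff.rfl

theorem IsBilipschitzOn.translate (h : IsBilipschitzOn φ c s) (x : E) :
    IsBilipschitzOn (fun v => φ (x + v) - φ x) c ((x + ·) ⁻¹' s) := by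
  intro v hv w hw
  simpa only [sub_sub_sub_cancel_right, add_sub_add_left_eq_sub] using h _ hv _ hw

theorem IsBilipschitzOn.invFunOn {t : Set E'} (h : IsBilipschitzOn φ c s) (hc : 0 < c)
    (hφ : BijOn φ s t) : IsBilipschitzOn (Function.invFunOn φ s) c t := by
  intro y hy y' hy'
  have h' := h _ (hφ.surjOn.mapsTo_invFunOn hy) _ (hφ.surjOn.mapsTo_invFunOn hy')
  rw [hφ.invOn_invFunOn.2 hy, hφ.invOn_invFunOn.2 hy'] at h'
  exact one_div_mul_le_and_le_mul_symm hc h'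

theorem IsLipeoOn.invFunOn {t : Set E'} (hφ : IsLipeoOn φ s t) :
    IsLipeoOn (Function.invFunOn φ s) t s :=
  let ⟨hbij, c, hc, hbil⟩ := isLipeoOn_iff.1 hφ
  ⟨hbij.symm hbij.invOn_invFunOn.symm, c, hc, hbil.invFunOn (by linarith) hbij⟩

theorem IsBilipschitzOn.continuousOn (h : IsBilipschitzOn φ c s) : ContinuousOn φ s := by
  refine (LipschitzOnWith.of_dist_le_mul (K := c.toNNReal) fun x hx y hy => ?_).continuousOn
  rw [dist_eq_norm, dist_eq_norm]
  exact (h x hx y hy).2.trans (by gcongr; exact Real.le_coe_toNNReal c)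

theorem IsBilipschitzOn.isBigO (h : IsBilipschitzOn φ c s) (hs : s ∈ 𝓝 0) (hφ0 : φ 0 = 0) :
    φ =O[𝓝 0] id :=
  IsBigO.of_bound c <| by
    filter_upwards [hs] with v hv
    simpa [hφ0] using (h v hv 0 (mem_of_mem_nhds hs)).2

end Bilipschitz

section Rescaling

variable {E E' : Type*} [NormedAddCommGroup E] [NormedSpace ℝ E]
  [NormedAddCommGroup E'] [NormedSpace ℝ E'] {ψ : E → E'} {c : ℝ} {s : Set E}

theorem IsBilipschitzOn.rescale (h : IsBilipschitzOn ψ c s) {t : ℝ} (ht : 0 < t) :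
    IsBilipschitzOn (fun v => t⁻¹ • ψ (t • v)) c ((t • ·) ⁻¹' s) := by
  intro v hv w hw
  obtain ⟨h₁, h₂⟩ := h _ hv _ hw
  rw [← smul_sub, norm_smul, Real.norm_of_nonneg ht.le] at h₁ h₂
  rw [← smul_sub, norm_smul, norm_inv, Real.norm_of_nonneg ht.le, le_inv_mul_iff₀ ht,
    inv_mul_le_iff₀ ht]
  constructor <;> linarith [mul_left_comm t (1 / c) ‖v - w‖, mul_left_comm t c ‖v - w‖]

theorem eventually_pos_and_smul_mem (hs : s ∈ 𝓝 0) (v : E) :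
    ∀ᶠ t in 𝓝[>] (0 : ℝ), 0 < t ∧ t • v ∈ s := by
  have hv : Tendsto (fun t : ℝ => t • v) (𝓝[>] 0) (𝓝 0) :=
    (tendsto_nhdsWithin_of_tendsto_nhds tendsto_id).smul_const v |>.trans (by rw [zero_smul])
  exact eventually_mem_nhdsWithin.and (hv hs)

theorem IsBilipschitzOn.exists_tendsto_rescale [ProperSpace E'] (h : IsBilipschitzOn ψ c s)
    (hs : s ∈ 𝓝 0) (hψ0 : ψ 0 = 0) :
    ∃ (𝒰 : Ultrafilter ℝ) (d : E → E'), (𝒰 : Filter ℝ) ≤ 𝓝[>] 0 ∧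
      (∀ v, Tendsto (fun t : ℝ => t⁻¹ • ψ (t • v)) 𝒰 (𝓝 (d v))) ∧
      ∀ v w, 1 / c * ‖v - w‖ ≤ ‖d v - d w‖ := by
  set 𝒰 := Ultrafilter.of (𝓝[>] (0 : ℝ))
  have h𝒰 : (𝒰 : Filter ℝ) ≤ 𝓝[>] 0 := Ultrafilter.of_le _
  have hev : ∀ v, ∀ᶠ t in (𝒰 : Filter ℝ), 0 < t ∧ t • v ∈ s :=
    fun v => h𝒰 (eventually_pos_and_smul_mem hs v)
  have hlim : ∀ v, ∃ y, Tendsto (fun t : ℝ => t⁻¹ • ψ (t • v)) 𝒰 (𝓝 y) := by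
    intro v
    have hbdd : ∀ᶠ t in (𝒰 : Filter ℝ), t⁻¹ • ψ (t • v) ∈ closedBall 0 (c * ‖v‖) := by
      filter_upwards [hev v] with t ⟨ht, hv⟩
      simpa [hψ0] using (h.rescale ht v hv 0 (by simpa using mem_of_mem_nhds hs)).2
    obtain ⟨y, -, hy⟩ := (isCompact_closedBall 0 (c * ‖v‖)).ultrafilter_le_nhds' (𝒰.map _) hbdd
    exact ⟨y, hy⟩
  choose d hd using hlim
  refine ⟨𝒰, d, h𝒰, hd, fun v w => ge_of_tendsto ((hd v).sub (hd w)).norm ?_⟩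
  filter_upwards [hev v, hev w] with t hvt hwt
  exact (h.rescale hvt.1 v hvt.2 w hwt.2).1

variable {W : Type*} [NormedAddCommGroup W] [NormedSpace ℝ W]

theorem apply_eq_zero_of_tendsto_rescale {l : Filter ℝ} [l.NeBot] (hl : l ≤ 𝓝 0) {v : E} {d : E'}
    (hd : Tendsto (fun t : ℝ => t⁻¹ • ψ (t • v)) l (𝓝 d)) (B : E' →L[ℝ] W) {K : Submodule ℝ E}
    (hv : v ∈ K) (hB : (fun w => B (ψ w)) =o[𝓝[K] 0] id) : B d = 0 := by
  have htv : Tendsto (fun t : ℝ => t • v) l (𝓝[K] 0) :=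
    tendsto_nhdsWithin_iff.2 ⟨(tendsto_id.mono_left hl).smul_const v |>.trans (by rw [zero_smul]),
      Eventually.of_forall fun t => K.smul_mem t hv⟩
  have hsmul : (fun t : ℝ => t • v) =O[l] fun t => t :=
    IsBigO.of_bound ‖v‖ (Eventually.of_forall fun t => by rw [norm_smul, mul_comm])
  have hzero := ((hB.comp_tendsto htv).trans_isBigO hsmul).tendsto_inv_smul_nhds_zero
  refine tendsto_nhds_unique ((B.continuous.tendsto d).comp hd) ?_
  simpa only [Function.comp_def, map_smul] using hzero

end Rescaling

section Comparison

variable {E E' W W' : Type*} [NormedAddCommGroup E] [NormedSpace ℝ E]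
  [NormedAddCommGroup E'] [NormedSpace ℝ E'] [NormedAddCommGroup W] [NormedSpace ℝ W]
  [NormedAddCommGroup W'] [NormedSpace ℝ W']
  {F : E → W} {G : E' → W'} {A : E →L[ℝ] W} {B : E' →L[ℝ] W'} {x : E} {x' : E'}
  {ψ : E → E'} {C : ℝ}

theorem HasFDerivAt.isLittleO_comp_nhdsWithin_ker (hA : HasFDerivAt F A x)
    (hB : HasFDerivAt G B x') (hψ : ψ =O[𝓝 0] id)
    (hcmp : ∀ᶠ v in 𝓝 0, ‖G (x' + ψ v) - G x'‖ ≤ C * ‖F (x + v) - F x‖) :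
    (fun v => B (ψ v)) =o[𝓝[LinearMap.ker (A : E →ₗ[ℝ] W)] 0] id := by
  have hF : (fun v => F (x + v) - F x) =o[𝓝[LinearMap.ker (A : E →ₗ[ℝ] W)] 0] id := by
    refine ((hasFDerivAt_iff_isLittleO_nhds_zero.1 hA).mono nhdsWithin_le_nhds).congr' ?_
      EventuallyEq.rfl
    filter_upwards [self_mem_nhdsWithin] with v hv
    have hAv : A v = 0 := hv
    simp [hAv]
  have hG₁ : (fun v => G (x' + ψ v) - G x') =o[𝓝[LinearMap.ker (A : E →ₗ[ℝ] W)] 0] id :=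
    (IsBigO.of_bound C (nhdsWithin_le_nhds hcmp)).trans_isLittleO hF
  have hG₂ : (fun v => G (x' + ψ v) - G x' - B (ψ v)) =o[𝓝 0] id :=
    ((hasFDerivAt_iff_isLittleO_nhds_zero.1 hB).comp_tendsto
      (hψ.trans_tendsto tendsto_id)).trans_isBigO hψ
  simpa only [sub_sub_cancel] using hG₁.sub (hG₂.mono nhdsWithin_le_nhds)

theorem HasFDerivAt.finrank_ker_le_of_isBilipschitzOn [FiniteDimensional ℝ E]
    [FiniteDimensional ℝ E'] (hA : HasFDerivAt F A x) (hB : HasFDerivAt G B x') {c : ℝ}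
    {s : Set E} (hc : 0 < c) (hs : s ∈ 𝓝 0) (hψ0 : ψ 0 = 0) (hψ : IsBilipschitzOn ψ c s)
    (hcmp : ∀ᶠ v in 𝓝 0, ‖G (x' + ψ v) - G x'‖ ≤ C * ‖F (x + v) - F x‖) :
    Module.finrank ℝ (LinearMap.ker (A : E →ₗ[ℝ] W)) ≤
      Module.finrank ℝ (LinearMap.ker (B : E' →ₗ[ℝ] W')) := by
  obtain ⟨𝒰, d, h𝒰, hd, hd_lower⟩ := hψ.exists_tendsto_rescale hs hψ0
  have hker := hA.isLittleO_comp_nhdsWithin_ker hB (hψ.isBigO hs hψ0) hcmp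
  have hdB : ∀ v ∈ LinearMap.ker (A : E →ₗ[ℝ] W), d v ∈ LinearMap.ker (B : E' →ₗ[ℝ] W') :=
    fun v hv => apply_eq_zero_of_tendsto_rescale (h𝒰.trans nhdsWithin_le_nhds) (hd v) B hv hker
  refine AntilipschitzWith.finrank_le (k := c.toNNReal)
    (f := fun v : LinearMap.ker (A : E →ₗ[ℝ] W) =>
      (⟨d v, hdB v v.2⟩ : LinearMap.ker (B : E' →ₗ[ℝ] W')))
    (AntilipschitzWith.of_le_mul_dist fun v w => ?_)
  rw [Subtype.dist_eq, Subtype.dist_eq, dist_eq_norm, dist_eq_norm, Real.coe_toNNReal c hc.le]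
  have h := hd_lower v w
  rwa [one_div, inv_mul_le_iff₀ hc] at h

end Comparison

section Lipeomorphism

variable {E E' W : Type*} [NormedAddCommGroup E] [NormedSpace ℝ E]
  [NormedAddCommGroup E'] [NormedSpace ℝ E'] [NormedAddCommGroup W]
  {φ : E → E'} {U : Set E} {V : Set E'} {F : E → W} {G : E' → W} {x : E}

theorem AsympLipEquivAtVia.symm (h : AsympLipEquivAtVia F G φ x) (hφ : IsLipeoOn φ U V)
    (hV : IsOpen V) (hx : x ∈ U) : AsympLipEquivAtVia G F (Function.invFunOn φ U) (φ x) := by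
  obtain ⟨c, hc, hev⟩ := h
  obtain ⟨-, c', -, hbil⟩ := isLipeoOn_iff.1 hφ.invFunOn
  have hinv := hφ.1.invOn_invFunOn
  have hVx : V ∈ 𝓝 (φ x) := hV.mem_nhds (hφ.1.mapsTo hx)
  have hcont : Tendsto (Function.invFunOn φ U) (𝓝 (φ x)) (𝓝 x) := by
    simpa only [hinv.1 hx] using (hbil.continuousOn.continuousAt hVx).tendsto
  refine ⟨c, hc, ?_⟩
  filter_upwards [hVx, hcont.eventually hev] with y hy hy'
  rw [hinv.1 hx]
  rw [hinv.2 hy] at hy'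
  exact one_div_mul_le_and_le_mul_symm (by linarith) hy'

variable [NormedSpace ℝ W] [FiniteDimensional ℝ E] [FiniteDimensional ℝ E']

theorem AsympLipEquivAtVia.finrank_ker_fderiv_le (h : AsympLipEquivAtVia F G φ x)
    (hφ : IsLipeoOn φ U V) (hU : IsOpen U) (hx : x ∈ U) (hF : DifferentiableAt ℝ F x)
    (hG : DifferentiableAt ℝ G (φ x)) :
    Module.finrank ℝ (LinearMap.ker (fderiv ℝ F x : E →ₗ[ℝ] W)) ≤
      Module.finrank ℝ (LinearMap.ker (fderiv ℝ G (φ x) : E' →ₗ[ℝ] W)) := by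
  obtain ⟨-, c, hc, hbil⟩ := isLipeoOn_iff.1 hφ
  obtain ⟨C, -, hev⟩ := h
  have hshift : Tendsto (x + ·) (𝓝 0) (𝓝 x) := by
    simpa using (tendsto_const_nhds (x := x)).add (tendsto_id (x := 𝓝 (0 : E)))
  refine hF.hasFDerivAt.finrank_ker_le_of_isBilipschitzOn hG.hasFDerivAt (C := C) (by linarith)
    ((hU.preimage (continuous_const_add x)).mem_nhds (by simpa)) (by simp) (hbil.translate x) ?_
  filter_upwards [hshift.eventually hev] with v hv
  simpa only [add_sub_cancel] using hv.2

end Lipeomorphism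

/-- if `F ≈_x G` via a lipeomorphism `φ`, then
`rank D_x F = rank D_{φ(x)} G`. -/
theorem rank_fderiv_of_asympLipEquiv {n p : ℕ}
    (U V : Set (Eucl n)) (hU : IsOpen U) (hV : IsOpen V)
    (F G : Eucl n → Eucl p)
    (hF : ∀ y ∈ U, DifferentiableAt ℝ F y) (hG : ∀ y ∈ V, DifferentiableAt ℝ G y)
    (φ : Eucl n → Eucl n) (hφ : IsLipeoOn φ U V)
    (x : Eucl n) (hx : x ∈ U)
    (hequiv : AsympLipEquivAtVia F G φ x) :
    LinearMap.rank ((fderiv ℝ F x : Eucl n →L[ℝ] Eucl p) : Eucl n →ₗ[ℝ] Eucl p) =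
      LinearMap.rank ((fderiv ℝ G (φ x) : Eucl n →L[ℝ] Eucl p) : Eucl n →ₗ[ℝ] Eucl p) := by
  have hφx : φ x ∈ V := hφ.1.mapsTo hx
  have hinv : Function.invFunOn φ U (φ x) = x := hφ.1.invOn_invFunOn.1 hx
  have hle := hequiv.finrank_ker_fderiv_le hφ hU hx (hF x hx) (hG _ hφx)
  have hge := (hequiv.symm hφ hV hx).finrank_ker_fderiv_le hφ.invFunOn hV hφx (hG _ hφx)
    (by rw [hinv]; exact hF x hx)
  rw [hinv] at hge
  exact LinearMap.rank_eq_rank_of_finrank_ker_eq (le_antisymm hle hge)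
end
end
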